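/- Let P and P̃ be n×n real matrices with ‖Pᵀ‖ ≤ 1 and ‖P̃ᵀ‖ ≤ 1 (operator norm), and let α ∈ (0, 1). Define pr_α(x) = (1−α)·Σ_{t=0}^∞ αᵗ·(Pᵀ)ᵗ·x and p̃r_α(x) = (1−α)·Σ_{t=0}^∞ αᵗ·(P̃ᵀ)ᵗ·x. Then for every y ∈ ℝⁿ, setting r = α·(P̃ᵀ − Pᵀ)·pr_α(y), one has p̃r_α(y) = pr_α(y) + (1/(1−α))·p̃r_α(r). -/
import Mathlib
set_option maxHeartbeats 1000000


open Matrix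

/-- The personalized PageRank map `pr_α(x) = (1−α)·Σ_{t=0}^∞ αᵗ·(Pᵀ)ᵗ·x`. -/
noncomputable def persPR {n : ℕ} (P : Matrix (Fin n) (Fin n) ℝ) (α : ℝ)
    (x : EuclideanSpace ℝ (Fin n)) : EuclideanSpace ℝ (Fin n) :=
  (1 - α) • ∑' t : ℕ, α ^ t • ((Matrix.toEuclideanCLM (𝕜 := ℝ) Pᵀ) ^ t) x

lemma persPR_summable {n : ℕ} (A : EuclideanSpace ℝ (Fin n) →L[ℝ] EuclideanSpace ℝ (Fin n))
    (hA : ‖A‖ ≤ 1) {α : ℝ} (hα : α ∈ Set.Ioo (0 : ℝ) 1) (x : EuclideanSpace ℝ (Fin n)) :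
    Summable (fun t : ℕ => α ^ t • (A ^ t) x) := by
  obtain ⟨h0, h1⟩ := hα
  have hAt : ∀ t : ℕ, ‖A ^ t‖ ≤ 1 := by
    intro t
    induction t with
    | zero =>
      rw [pow_zero]
      exact ContinuousLinearMap.opNorm_le_bound _ zero_le_one (by simp)
    | succ t ih =>
      rw [pow_succ]
      exact (norm_mul_le _ _).trans (by nlinarith [norm_nonneg (A ^ t)])
  apply Summable.of_norm
  have hgeo : Summable (fun t : ℕ => α ^ t * ‖x‖) :=
    (summable_geometric_of_lt_one h0.le h1).mul_right _
  refine hgeo.of_nonneg_of_le (fun t => norm_nonneg _) (fun t => ?_)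
  rw [norm_smul, Real.norm_eq_abs, abs_of_nonneg (pow_nonneg h0.le t)]
  have h2 : ‖(A ^ t) x‖ ≤ ‖x‖ := by
    have := (A ^ t).le_opNorm x
    nlinarith [hAt t, norm_nonneg x, norm_nonneg ((A ^ t) x)]
  exact mul_le_mul_of_nonneg_left h2 (pow_nonneg h0.le t)

lemma persPR_fixed {n : ℕ} (P : Matrix (Fin n) (Fin n) ℝ)
    (hP : ‖Matrix.toEuclideanCLM (𝕜 := ℝ) Pᵀ‖ ≤ 1) {α : ℝ}
    (hα : α ∈ Set.Ioo (0 : ℝ) 1) (x : EuclideanSpace ℝ (Fin n)) :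
    persPR P α x = (1 - α) • x +
      α • (Matrix.toEuclideanCLM (𝕜 := ℝ) Pᵀ) (persPR P α x) := by
  set A := Matrix.toEuclideanCLM (𝕜 := ℝ) Pᵀ
  have hsum := persPR_summable A hP hα x
  set S := ∑' t : ℕ, α ^ t • (A ^ t) x with hS
  have hAS : α • A S = S - x := by
    have h2 : α • A S = ∑' t : ℕ, α ^ (t + 1) • (A ^ (t + 1)) x := by
      have hsmul : α • A S = (α • A) S := rfl
      rw [hsmul, hS, (α • A).map_tsum hsum]
      congr 1; ext t
      rw [ContinuousLinearMap.smul_apply, A.map_smul, smul_smul, ← pow_succ',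
        pow_succ' A t, ContinuousLinearMap.mul_apply]
    have h3 : S = x + ∑' t : ℕ, α ^ (t + 1) • (A ^ (t + 1)) x := by
      rw [hS, Summable.tsum_eq_zero_add hsum]
      simp
    rw [h2, h3]; abel
  show (1 - α) • S = (1 - α) • x + α • A ((1 - α) • S)
  rw [A.map_smul, smul_comm α, ← smul_add, hAS]
  congr 1
  abel

/-- the updating equation of Yoon et al.:
`p̃r_α(y) = pr_α(y) + (1/(1−α))·p̃r_α(r)` with `r = α·(P̃ᵀ − Pᵀ)·pr_α(y)`. -/
theorem stmt8 {n : ℕ} (P Pt : Matrix (Fin n) (Fin n) ℝ)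
    (hP : ‖Matrix.toEuclideanCLM (𝕜 := ℝ) Pᵀ‖ ≤ 1)
    (hPt : ‖Matrix.toEuclideanCLM (𝕜 := ℝ) Ptᵀ‖ ≤ 1)
    (α : ℝ) (hα : α ∈ Set.Ioo (0 : ℝ) 1) (y : EuclideanSpace ℝ (Fin n))
    (r : EuclideanSpace ℝ (Fin n))
    (hr : r = α • (Matrix.toEuclideanCLM (𝕜 := ℝ) (Ptᵀ - Pᵀ)) (persPR P α y)) :
    persPR Pt α y = persPR P α y + (1 / (1 - α)) • persPR Pt α r := by
  obtain ⟨h0, h1⟩ := hα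
  set A := Matrix.toEuclideanCLM (𝕜 := ℝ) Pᵀ with hA
  set B := Matrix.toEuclideanCLM (𝕜 := ℝ) Ptᵀ with hB
  have hBA : Matrix.toEuclideanCLM (𝕜 := ℝ) (Ptᵀ - Pᵀ) = B - A := by
    rw [hA, hB, map_sub]
  set u := persPR P α y with hu
  set v := persPR Pt α y with hv
  set s := persPR Pt α r with hs
  have hne : (1 : ℝ) - α ≠ 0 := by linarith
  have hufix : u = (1 - α) • y + α • A u := persPR_fixed P hP ⟨h0, h1⟩ y
  have hvfix : v = (1 - α) • y + α • B v := persPR_fixed Pt hPt ⟨h0, h1⟩ y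
  have hsfix : s = (1 - α) • r + α • B s := persPR_fixed Pt hPt ⟨h0, h1⟩ r
  have hr' : r = α • (B u - A u) := by
    rw [hr, hBA]; simp [hu]
  set w := v - u - (1 / (1 - α)) • s with hw
  have key : w = α • B w := by
    have hBw : B w = B v - B u - (1 / (1 - α)) • B s := by
      rw [hw]; simp [map_sub, ContinuousLinearMap.map_smul]
    rw [hBw, hw]
    conv_lhs => rw [hvfix, hufix, hsfix, hr']
    set_option linter.unnecessarySeqFocus false in
    match_scalars <;> field_simp <;> ring
  have hw0 : w = 0 := by
    by_contra hne0
    have hpos : 0 < ‖w‖ := norm_pos_iff.mpr hne0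
    have hle : ‖w‖ ≤ α * ‖w‖ := by
      calc ‖w‖ = ‖α • B w‖ := by rw [← key]
        _ = |α| * ‖B w‖ := by rw [norm_smul, Real.norm_eq_abs]
        _ = α * ‖B w‖ := by rw [abs_of_pos h0]
        _ ≤ α * (‖B‖ * ‖w‖) := by
            have := B.le_opNorm w
            nlinarith [norm_nonneg (B w)]
        _ ≤ α * (1 * ‖w‖) := by nlinarith [hPt, mul_nonneg h0.le (norm_nonneg w), norm_nonneg w]
        _ = α * ‖w‖ := by ring
    nlinarith [mul_pos (show (0:ℝ) < 1 - α by linarith) hpos]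
  rw [hw] at hw0
  rw [← sub_eq_zero, ← sub_sub]
  exact hw0
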